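/- Let (γ,ν) : I → Δ₁ be a spacelike Legendre curve with curvature (m,n), μ = γ∧ν, and suppose there exists a smooth function f : I → ℝ with m(t) + f(t)n(t) = 0 for all t ∈ I. Define Ev^±(γ)(t) = γ(t) + f(t)ν(t) + (f(t)²/2)(γ(t) ± μ(t)) and ν_E^±(t) = ∓(f(t)²/2)γ(t) ∓ f(t)ν(t) + (1 − f(t)²/2)μ(t). Then (Ev^±(γ), ν_E^±) : I → Δ₁ is a spacelike Legendre curve, and with μ_E^± = Ev^±(γ) ∧ ν_E^± its curvature is (m_E^±, n_E^±) = (−ḟ ± f²n/2, ±ḟ − f²n/2 + n), i.e. (d/dt)Ev^±(γ) = m_E^±·μ_E^± and (d/dt)ν_E^± = n_E^±·μ_E^±. -/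

import Mathlib

noncomputable section

/-- Pseudo scalar product of Lorentz–Minkowski 3-space. -/
def mink (x y : Fin 3 → ℝ) : ℝ := -(x 0 * y 0) + x 1 * y 1 + x 2 * y 2

/-- Pseudo vector product of Lorentz–Minkowski 3-space. -/
def lcross (x y : Fin 3 → ℝ) : Fin 3 → ℝ :=
  ![-(x 1 * y 2 - x 2 * y 1), -(x 0 * y 2 - x 2 * y 0), x 0 * y 1 - x 1 * y 0]


lemma lcross_apply0 (x y : Fin 3 → ℝ) : lcross x y 0 = -(x 1 * y 2 - x 2 * y 1) := rfl
lemma lcross_apply1 (x y : Fin 3 → ℝ) : lcross x y 1 = -(x 0 * y 2 - x 2 * y 0) := rfl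
lemma lcross_apply2 (x y : Fin 3 → ℝ) : lcross x y 2 = x 0 * y 1 - x 1 * y 0 := rfl

lemma vec_ext {x y : Fin 3 → ℝ} (h0 : x 0 = y 0) (h1 : x 1 = y 1) (h2 : x 2 = y 2) :
    x = y := by
  funext i
  fin_cases i
  · exact h0
  · exact h1
  · exact h2

lemma mink_frame (A B : Fin 3 → ℝ) (hA : mink A A = -1) (hB : mink B B = 1)
    (hAB : mink A B = 0) (p q r p' q' r' : ℝ) :
    mink (p • A + q • B + r • lcross A B) (p' • A + q' • B + r' • lcross A B)
      = -(p * p') + q * q' + r * r' := by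
  simp only [mink, lcross_apply0, lcross_apply1, lcross_apply2, Pi.add_apply,
    Pi.smul_apply, smul_eq_mul] at *
  linear_combination (p*p' - r*r'*(-(B 0*B 0)+B 1*B 1+B 2*B 2))*hA + (q*q'+r*r')*hB
    + (p*q'+q*p' + r*r'*(-(A 0*B 0)+A 1*B 1+A 2*B 2))*hAB

lemma cross_frame (A B : Fin 3 → ℝ) (hA : mink A A = -1) (hB : mink B B = 1)
    (hAB : mink A B = 0) (p q r p' q' r' : ℝ) :
    lcross (p • A + q • B + r • lcross A B) (p' • A + q' • B + r' • lcross A B)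
      = (-(q*r'-r*q')) • A + (-(p*r'-r*p')) • B + (p*q'-q*p') • lcross A B := by
  simp only [mink] at hA hB hAB
  refine vec_ext ?_ ?_ ?_ <;>
    simp only [lcross_apply0, lcross_apply1, lcross_apply2, Pi.add_apply, Pi.smul_apply,
      smul_eq_mul]
  · linear_combination ((p*r'-r*p')*B 0)*hA + (-(q*r'-r*q')*A 0)*hB
      + ((q*r'-r*q')*B 0 - (p*r'-r*p')*A 0)*hAB
  · linear_combination ((p*r'-r*p')*B 1)*hA + (-(q*r'-r*q')*A 1)*hB
      + ((q*r'-r*q')*B 1 - (p*r'-r*p')*A 1)*hAB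
  · linear_combination ((p*r'-r*p')*B 2)*hA + (-(q*r'-r*q')*A 2)*hB
      + ((q*r'-r*q')*B 2 - (p*r'-r*p')*A 2)*hAB

lemma lcross_CB (A B : Fin 3 → ℝ) : lcross (lcross A B) B = mink B B • A - mink A B • B := by
  refine vec_ext ?_ ?_ ?_ <;>
    simp only [lcross_apply0, lcross_apply1, lcross_apply2, mink, Pi.sub_apply,
      Pi.smul_apply, smul_eq_mul] <;> ring

lemma lcross_AC (A B : Fin 3 → ℝ) : lcross A (lcross A B) = mink A A • B - mink A B • A := by
  refine vec_ext ?_ ?_ ?_ <;>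
    simp only [lcross_apply0, lcross_apply1, lcross_apply2, mink, Pi.sub_apply,
      Pi.smul_apply, smul_eq_mul] <;> ring

lemma lcross_smul_left (c : ℝ) (x y : Fin 3 → ℝ) : lcross (c • x) y = c • lcross x y := by
  refine vec_ext ?_ ?_ ?_ <;>
    simp only [lcross_apply0, lcross_apply1, lcross_apply2, Pi.smul_apply, smul_eq_mul] <;> ring

lemma lcross_smul_right (c : ℝ) (x y : Fin 3 → ℝ) : lcross x (c • y) = c • lcross x y := by
  refine vec_ext ?_ ?_ ?_ <;>
    simp only [lcross_apply0, lcross_apply1, lcross_apply2, Pi.smul_apply, smul_eq_mul] <;> ring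

lemma hasDerivAt_lcross {g v : ℝ → Fin 3 → ℝ} {g' v' : Fin 3 → ℝ} {t : ℝ}
    (hg : HasDerivAt g g' t) (hv : HasDerivAt v v' t) :
    HasDerivAt (fun s => lcross (g s) (v s)) (lcross g' (v t) + lcross (g t) v') t := by
  rw [hasDerivAt_pi] at hg hv ⊢
  have h0 : HasDerivAt (fun s => lcross (g s) (v s) 0)
      ((lcross g' (v t) + lcross (g t) v') 0) t := by
    simp only [lcross_apply0, Pi.add_apply]
    have h := (((hg 1).mul (hv 2)).sub ((hg 2).mul (hv 1))).neg
    exact h.congr_deriv (by ring)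
  have h1 : HasDerivAt (fun s => lcross (g s) (v s) 1)
      ((lcross g' (v t) + lcross (g t) v') 1) t := by
    simp only [lcross_apply1, Pi.add_apply]
    have h := (((hg 0).mul (hv 2)).sub ((hg 2).mul (hv 0))).neg
    exact h.congr_deriv (by ring)
  have h2 : HasDerivAt (fun s => lcross (g s) (v s) 2)
      ((lcross g' (v t) + lcross (g t) v') 2) t := by
    simp only [lcross_apply2, Pi.add_apply]
    have h := (((hg 0).mul (hv 1)).sub ((hg 1).mul (hv 0)))
    exact h.congr_deriv (by ring)
  intro i
  fin_cases i
  · exact h0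
  · exact h1
  · exact h2

lemma cone (x y : Fin 3 → ℝ) (hx : mink x x = -1) (hy : mink y y = -1)
    (hxy : mink x y < 0) (h0 : 0 < x 0) : 0 < y 0 := by
  simp only [mink] at hx hy hxy
  by_contra h
  push_neg at h
  nlinarith [sq_nonneg (x 1 * y 2 - x 2 * y 1), sq_nonneg (x 1 * y 1 + x 2 * y 2),
    mul_nonneg h0.le (neg_nonneg.mpr h), sq_nonneg (x 0 * y 0 + x 1 * y 1 + x 2 * y 2)]

/-- `(Ev^±(γ), ν_E^±)` is a spacelike Legendre curve with curvature
`(m_E^±, n_E^±) = (−ḟ ± f²n/2, ±ḟ − f²n/2 + n)`.  The sign `±` is encoded by `ε ∈ {1, -1}`. -/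
theorem stmt_4 (I : Set ℝ) (hI : I.OrdConnected)
    (γ ν : ℝ → Fin 3 → ℝ) (m n : ℝ → ℝ)
    (hγ : ContDiff ℝ (⊤ : ℕ∞) γ) (hν : ContDiff ℝ (⊤ : ℕ∞) ν)
    (hm : ContDiff ℝ (⊤ : ℕ∞) m) (hn : ContDiff ℝ (⊤ : ℕ∞) n)
    (hH : ∀ t ∈ I, mink (γ t) (γ t) = -1 ∧ 0 < γ t 0)
    (hS : ∀ t ∈ I, mink (ν t) (ν t) = 1)
    (hO : ∀ t ∈ I, mink (γ t) (ν t) = 0)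
    (hdγ : ∀ t ∈ I, deriv γ t = m t • lcross (γ t) (ν t))
    (hdν : ∀ t ∈ I, deriv ν t = n t • lcross (γ t) (ν t))
    (ε : ℝ) (hε : ε = 1 ∨ ε = -1)
    (f : ℝ → ℝ) (hf : ContDiff ℝ (⊤ : ℕ∞) f)
    (hfmn : ∀ t ∈ I, m t + f t * n t = 0)
    (Ev νE : ℝ → Fin 3 → ℝ)
    (hEv : ∀ t, Ev t
      = γ t + f t • ν t + (f t ^ 2 / 2) • (γ t + ε • lcross (γ t) (ν t)))
    (hνE : ∀ t, νE t
      = (-ε * (f t ^ 2 / 2)) • γ t + (-ε * f t) • ν t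
        + (1 - f t ^ 2 / 2) • lcross (γ t) (ν t))
    (μE : ℝ → Fin 3 → ℝ) (hμE : ∀ t, μE t = lcross (Ev t) (νE t)) :
    ∀ t ∈ I,
      (mink (Ev t) (Ev t) = -1 ∧ 0 < Ev t 0) ∧
      mink (νE t) (νE t) = 1 ∧
      mink (Ev t) (νE t) = 0 ∧
      deriv Ev t = (-(deriv f t) + ε * (f t ^ 2 * n t / 2)) • μE t ∧
      deriv νE t = (ε * deriv f t - f t ^ 2 * n t / 2 + n t) • μE t := by
  have hε2 : ε ^ 2 = 1 := by rcases hε with rfl | rfl <;> norm_num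
  intro t ht
  obtain ⟨hAA, hpos⟩ := hH t ht
  have hBB := hS t ht
  have hAB := hO t ht
  have hm' : m t = -(f t * n t) := by have := hfmn t ht; linarith
  -- Frame forms at t
  have hEvt : Ev t = (1 + f t ^ 2 / 2) • γ t + f t • ν t
      + (ε * (f t ^ 2 / 2)) • lcross (γ t) (ν t) := by rw [hEv]; module
  have hνEt : νE t = (-(ε * (f t ^ 2 / 2))) • γ t + (-(ε * f t)) • ν t
      + (1 - f t ^ 2 / 2) • lcross (γ t) (ν t) := by rw [hνE]; module
  have hμEt : μE t = (-(f t)) • γ t + (-1 : ℝ) • ν t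
      + (-(ε * f t)) • lcross (γ t) (ν t) := by
    rw [hμE, hEvt, hνEt, cross_frame _ _ hAA hBB hAB]
    match_scalars
    · linear_combination (-(f t ^ 3) / 2) * hε2
    · linear_combination (-(f t ^ 4) / 4) * hε2
    · ring
  have h1 : mink (Ev t) (Ev t) = -1 := by
    rw [hEvt, mink_frame _ _ hAA hBB hAB]
    linear_combination (f t ^ 4 / 4) * hε2
  have h2 : mink (νE t) (νE t) = 1 := by
    rw [hνEt, mink_frame _ _ hAA hBB hAB]
    linear_combination (f t ^ 2 - f t ^ 4 / 4) * hε2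
  have h3 : mink (Ev t) (νE t) = 0 := by
    rw [hEvt, hνEt, mink_frame _ _ hAA hBB hAB]
    ring
  have hpos' : 0 < Ev t 0 := by
    have h := mink_frame (γ t) (ν t) hAA hBB hAB 1 0 0
      (1 + f t ^ 2 / 2) (f t) (ε * (f t ^ 2 / 2))
    have e : (1 : ℝ) • γ t + (0 : ℝ) • ν t + (0 : ℝ) • lcross (γ t) (ν t) = γ t := by
      module
    rw [e, ← hEvt] at h
    exact cone (γ t) (Ev t) hAA h1 (by rw [h]; nlinarith [sq_nonneg (f t)]) hpos
  -- Derivatives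
  have hgd : HasDerivAt γ (m t • lcross (γ t) (ν t)) t := by
    have h := (hγ.differentiable (by simp) t).hasDerivAt
    rwa [hdγ t ht] at h
  have hvd : HasDerivAt ν (n t • lcross (γ t) (ν t)) t := by
    have h := (hν.differentiable (by simp) t).hasDerivAt
    rwa [hdν t ht] at h
  have hfd : HasDerivAt f (deriv f t) t := (hf.differentiable (by simp) t).hasDerivAt
  have hCd : HasDerivAt (fun s => lcross (γ s) (ν s))
      ((m t) • γ t + (-(n t)) • ν t) t := by
    have h := hasDerivAt_lcross hgd hvd
    convert h using 1
    rw [lcross_smul_left, lcross_smul_right, lcross_CB, lcross_AC, hAA, hBB, hAB]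
    module
  have hsq : HasDerivAt (fun s => f s ^ 2 / 2) (f t * deriv f t) t := by
    have h := (hfd.pow 2).div_const 2
    exact h.congr_deriv (by push_cast; ring)
  have hp1 : HasDerivAt (fun s => 1 + f s ^ 2 / 2) (f t * deriv f t) t := hsq.const_add 1
  have hr1 : HasDerivAt (fun s => ε * (f s ^ 2 / 2)) (ε * (f t * deriv f t)) t :=
    hsq.const_mul ε
  have hp2 : HasDerivAt (fun s => -(ε * (f s ^ 2 / 2))) (-(ε * (f t * deriv f t))) t :=
    hr1.neg
  have hq2 : HasDerivAt (fun s => -(ε * f s)) (-(ε * deriv f t)) t := (hfd.const_mul ε).neg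
  have hr2 : HasDerivAt (fun s => 1 - f s ^ 2 / 2) (-(f t * deriv f t)) t := by
    have h := hsq.const_sub 1
    convert h using 1
  have hEvfun : Ev = fun s => (1 + f s ^ 2 / 2) • γ s + f s • ν s
      + (ε * (f s ^ 2 / 2)) • lcross (γ s) (ν s) := by
    funext s; rw [hEv]; module
  have hνEfun : νE = fun s => (-(ε * (f s ^ 2 / 2))) • γ s + (-(ε * f s)) • ν s
      + (1 - f s ^ 2 / 2) • lcross (γ s) (ν s) := by
    funext s; rw [hνE]; module
  have hED := ((hp1.smul hgd).add (hfd.smul hvd)).add (hr1.smul hCd)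
  replace hED : HasDerivAt (fun s => (1 + f s ^ 2 / 2) • γ s + f s • ν s + (ε * (f s ^ 2 / 2)) • lcross (γ s) (ν s))
      _ t := hED
  rw [← hEvfun] at hED
  have hνED := ((hp2.smul hgd).add (hq2.smul hvd)).add (hr2.smul hCd)
  replace hνED : HasDerivAt (fun s => (-(ε * (f s ^ 2 / 2))) • γ s + (-(ε * f s)) • ν s + (1 - f s ^ 2 / 2) • lcross (γ s) (ν s))
      _ t := hνED
  rw [← hνEfun] at hνED
  have goal4 : deriv Ev t = (-(deriv f t) + ε * (f t ^ 2 * n t / 2)) • μE t := by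
    rw [hED.deriv, hμEt, hm']
    rcases hε with rfl | rfl <;> match_scalars <;> ring
  have goal5 : deriv νE t = (ε * deriv f t - f t ^ 2 * n t / 2 + n t) • μE t := by
    rw [hνED.deriv, hμEt, hm']
    rcases hε with rfl | rfl <;> match_scalars <;> ring
  exact ⟨⟨h1, hpos'⟩, h2, h3, goal4, goal5⟩
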